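/- arXiv:1912.07703 — 6 statements merged into one kernel-verified Lean document; each statement's English description precedes it below -/
import Mathlib

section
/- With L, L_eq, and Γ_m as above, the matrix Γ_m^⊺ diag(L) Γ_m ∈ ℝ^{(m-1)×(m-1)} is diagonal, with k-th diagonal entry equal to L_eq(k) + L_{k+1}. In particular it is positive definite. -/
open Finset Matrix

/-- `L_eq(k)`: equivalent inductance of coils `0,…,k` in parallel. -/
noncomputable def Leq {n : ℕ} (L : Fin (n + 1) → ℝ) (k : Fin (n + 1)) : ℝ :=
  (∑ j ∈ Finset.univ.filter (· ≤ k), (L j)⁻¹)⁻¹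

/-- The matrix `G` with `G_{k,j} = L_eq(k)/L_j` if `j ≤ k`, else `0`. -/
noncomputable def Gmat {n : ℕ} (L : Fin (n + 1) → ℝ) : Matrix (Fin n) (Fin (n + 1)) ℝ :=
  fun k j => if (j : ℕ) ≤ (k : ℕ) then Leq L k.castSucc / L j else 0

/-- `Γ_m^⊺ = G − [0 | I]`. -/
noncomputable def GammaT {n : ℕ} (L : Fin (n + 1) → ℝ) : Matrix (Fin n) (Fin (n + 1)) ℝ :=
  Gmat L - Matrix.of (fun (k : Fin n) (j : Fin (n+1)) => if (j : ℕ) = (k : ℕ) + 1 then 1 else 0)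

lemma Leq_pos {n : ℕ} {L : Fin (n + 1) → ℝ} (hL : ∀ j, 0 < L j) (k : Fin (n + 1)) :
    0 < Leq L k := by
  unfold Leq
  apply inv_pos.mpr
  apply Finset.sum_pos (fun j _ => inv_pos.mpr (hL j))
  exact ⟨k, by simp⟩

lemma sum_inv_eq {n : ℕ} (L : Fin (n + 1) → ℝ) (k : Fin (n + 1)) :
    ∑ j ∈ Finset.univ.filter (· ≤ k), (L j)⁻¹ = (Leq L k)⁻¹ := by
  simp [Leq]

lemma entry_eq {n : ℕ} (L : Fin (n + 1) → ℝ) (k l : Fin n) :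
    (GammaT L * Matrix.diagonal L * (GammaT L)ᵀ) k l
      = ∑ j, GammaT L k j * L j * GammaT L l j := by
  rw [Matrix.mul_apply]
  simp only [Matrix.mul_diagonal, Matrix.transpose_apply]

lemma offdiag {n : ℕ} {L : Fin (n + 1) → ℝ} (hL : ∀ j, 0 < L j) (k l : Fin n)
    (hkl : k < l) : ∑ j, GammaT L k j * L j * GammaT L l j = 0 := by
  have hkl' : (k : ℕ) < (l : ℕ) := hkl
  have hj : ∀ j : Fin (n+1), GammaT L k j * L j * GammaT L l j =
      (if (j:ℕ) ≤ (k:ℕ) then Leq L k.castSucc * Leq L l.castSucc * (L j)⁻¹ else 0)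
      - (if j = l.succ then (if (j:ℕ) ≤ (k:ℕ) then Leq L k.castSucc else 0) else 0)
      - (if j = k.succ then (if (j:ℕ) ≤ (l:ℕ) then Leq L l.castSucc else 0) else 0)
      + (if j = k.succ then (if j = l.succ then L j else 0) else 0) := by
    intro j
    have hLj : L j ≠ 0 := (hL j).ne'
    have h1 : (j = k.succ) ↔ ((j:ℕ) = (k:ℕ) + 1) := by
      rw [Fin.ext_iff, Fin.val_succ]
    have h2 : (j = l.succ) ↔ ((j:ℕ) = (l:ℕ) + 1) := by
      rw [Fin.ext_iff, Fin.val_succ]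
    simp only [GammaT, Gmat, Matrix.sub_apply, Matrix.of_apply, h1, h2]
    split_ifs <;> first | (exfalso; omega) | (field_simp <;> ring)
  rw [Finset.sum_congr rfl (fun j _ => hj j)]
  rw [Finset.sum_add_distrib, Finset.sum_sub_distrib, Finset.sum_sub_distrib]
  rw [Finset.sum_ite_eq' Finset.univ (l.succ), Finset.sum_ite_eq' Finset.univ (k.succ),
    Finset.sum_ite_eq' Finset.univ (k.succ)]
  have hS1 : ∑ j : Fin (n+1), (if (j:ℕ) ≤ (k:ℕ) then Leq L k.castSucc * Leq L l.castSucc * (L j)⁻¹ else 0)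
      = Leq L l.castSucc := by
    have hc : ∀ j : Fin (n+1), ((j:ℕ) ≤ (k:ℕ)) ↔ j ≤ k.castSucc := by
      intro j; rw [Fin.le_def]; rfl
    simp only [hc]
    rw [← Finset.sum_filter, ← Finset.mul_sum, sum_inv_eq]
    rw [mul_assoc, mul_comm (Leq L l.castSucc), ← mul_assoc,
      mul_inv_cancel₀ (Leq_pos hL k.castSucc).ne', one_mul]
  rw [hS1]
  have h4 : (k.succ : Fin (n+1)) ≠ l.succ := by
    simp only [ne_eq, Fin.ext_iff, Fin.val_succ]; omega
  have e1 : ¬ ((l.succ : Fin (n+1)) : ℕ) ≤ (k : ℕ) := by simp only [Fin.val_succ]; omega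
  have e2 : ((k.succ : Fin (n+1)) : ℕ) ≤ (l : ℕ) := by simp only [Fin.val_succ]; omega
  simp only [Finset.mem_univ, if_true, if_neg e1, if_pos e2, if_neg h4]
  ring
lemma diag_entry {n : ℕ} {L : Fin (n + 1) → ℝ} (hL : ∀ j, 0 < L j) (k : Fin n) :
    ∑ j, GammaT L k j * L j * GammaT L k j = Leq L k.castSucc + L k.succ := by
  have hj : ∀ j : Fin (n+1), GammaT L k j * L j * GammaT L k j =
      (if (j:ℕ) ≤ (k:ℕ) then Leq L k.castSucc * Leq L k.castSucc * (L j)⁻¹ else 0)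
      + (if j = k.succ then L j else 0) := by
    intro j
    have hLj : L j ≠ 0 := (hL j).ne'
    have h1 : (j = k.succ) ↔ ((j:ℕ) = (k:ℕ) + 1) := by
      rw [Fin.ext_iff, Fin.val_succ]
    simp only [GammaT, Gmat, Matrix.sub_apply, Matrix.of_apply, h1]
    split_ifs <;> first | (exfalso; omega) | (field_simp <;> ring)
  rw [Finset.sum_congr rfl (fun j _ => hj j), Finset.sum_add_distrib,
    Finset.sum_ite_eq' Finset.univ (k.succ)]
  have hS1 : ∑ j : Fin (n+1), (if (j:ℕ) ≤ (k:ℕ) then Leq L k.castSucc * Leq L k.castSucc * (L j)⁻¹ else 0)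
      = Leq L k.castSucc := by
    have hc : ∀ j : Fin (n+1), ((j:ℕ) ≤ (k:ℕ)) ↔ j ≤ k.castSucc := by
      intro j; rw [Fin.le_def]; rfl
    simp only [hc]
    rw [← Finset.sum_filter, ← Finset.mul_sum, sum_inv_eq]
    rw [mul_assoc, mul_inv_cancel₀ (Leq_pos hL k.castSucc).ne', mul_one]
  rw [hS1]
  simp

theorem stmt2 (n : ℕ) (hn : 1 ≤ n) (L : Fin (n + 1) → ℝ) (hL : ∀ j, 0 < L j) :
    GammaT L * Matrix.diagonal L * (GammaT L)ᵀ =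
      Matrix.diagonal (fun k : Fin n => Leq L k.castSucc + L k.succ) ∧
    (GammaT L * Matrix.diagonal L * (GammaT L)ᵀ).PosDef := by
  have hmain : GammaT L * Matrix.diagonal L * (GammaT L)ᵀ =
      Matrix.diagonal (fun k : Fin n => Leq L k.castSucc + L k.succ) := by
    ext k l
    rw [entry_eq]
    rcases lt_trichotomy k l with h | h | h
    · rw [offdiag hL k l h, Matrix.diagonal_apply_ne _ (ne_of_lt h)]
    · subst h
      rw [diag_entry hL k, Matrix.diagonal_apply_eq]
    · have hsym : ∑ j, GammaT L k j * L j * GammaT L l j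
          = ∑ j, GammaT L l j * L j * GammaT L k j := by
        apply Finset.sum_congr rfl; intro j _; ring
      rw [hsym, offdiag hL l k h, Matrix.diagonal_apply_ne _ (ne_of_gt h)]
  refine ⟨hmain, ?_⟩
  rw [hmain, Matrix.posDef_diagonal_iff]
  intro k
  exact add_pos (Leq_pos hL k.castSucc) (hL k.succ)
end

section
/- Let 𝒥 ∈ ℝ^{(m+1)×(m+1)} be the skew-symmetric matrix with block structure [[0, −𝟙_m],[𝟙_m^⊺, 0]] and ℛ = diag(0,...,0, 1/R). If C : ℝ^{m+1} → ℝ^{m-1} is defined by C(x) = Γ_m^⊺ φ (where x = (φ, Q)), then (∂C/∂x)(𝒥 − ℛ) = 0; that is, each component of C is a Casimir function of the port-Hamiltonian system ẋ = (𝒥 − ℛ)∇H(x) for every Hamiltonian H. -/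
open Matrix

/-- Interconnection matrix `𝒥 = [[0, −𝟙_m],[𝟙_m^⊺, 0]]` on `ℝ^{m+1}`
(state `x = (φ, Q)`, charge index `Sum.inr ()`). -/
def Jmat (m : ℕ) : Matrix (Fin m ⊕ Unit) (Fin m ⊕ Unit) ℝ :=
  fun i j =>
    match i, j with
    | Sum.inl _, Sum.inr _ => -1
    | Sum.inr _, Sum.inl _ => 1
    | _, _ => 0

/-- Dissipation matrix `ℛ = diag(0_m, 1/R)`. -/
noncomputable def Rmat (m : ℕ) (R : ℝ) : Matrix (Fin m ⊕ Unit) (Fin m ⊕ Unit) ℝ :=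
  fun i j =>
    match i, j with
    | Sum.inr _, Sum.inr _ => 1 / R
    | _, _ => 0

/-- Jacobian `∂C/∂x = [Γ_m^⊺ | 0]` of the Casimir candidate `C(x) = Γ_m^⊺ φ`. -/
def DC {m p : ℕ} (GammaT : Matrix (Fin p) (Fin m) ℝ) :
    Matrix (Fin p) (Fin m ⊕ Unit) ℝ :=
  fun k i =>
    match i with
    | Sum.inl j => GammaT k j
    | Sum.inr _ => 0

/-- Each component of `C(x) = Γ_m^⊺ φ` is a Casimir function of
`ẋ = (𝒥 − ℛ)∇H(x)`: `(∂C/∂x)(𝒥 − ℛ) = 0`, independently of the Hamiltonian `H`. -/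
theorem stmt5 (m p : ℕ) (R : ℝ) (hR : 0 < R)
    (GammaT : Matrix (Fin p) (Fin m) ℝ)
    (hGamma : GammaT.mulVec (fun _ => (1 : ℝ)) = 0) :
    DC GammaT * (Jmat m - Rmat m R) = 0 := by
  ext k j
  have h := congrFun hGamma k
  simp only [Matrix.mulVec, dotProduct, mul_one, Pi.zero_apply] at h
  cases j with
  | inl j =>
      simp [Matrix.mul_apply, DC, Jmat, Rmat, Fintype.sum_sum_type]
  | inr u =>
      simp [Matrix.mul_apply, DC, Jmat, Rmat, Fintype.sum_sum_type, Finset.sum_neg_distrib, h]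
end

section
/- The 3×3 matrix M = [[−k_d, −1, 0],[1, −1/R, −k_i],[0, k_i, 0]] · diag(1/L, 1/C, 1/k_i) is Hurwitz for all k_d > 0, k_i > 0, R > 0, L > 0, C > 0. -/
set_option maxHeartbeats 1000000

/-- A real square matrix is Hurwitz if every complex eigenvalue has strictly
negative real part. -/
def Hurwitz {n : ℕ} (A : Matrix (Fin n) (Fin n) ℝ) : Prop :=
  ∀ μ ∈ spectrum ℂ (A.map (Complex.ofReal)), μ.re < 0

theorem stmt12 (kd ki R L C : ℝ) (hkd : 0 < kd) (hki : 0 < ki) (hR : 0 < R)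
    (hL : 0 < L) (hC : 0 < C) :
    Hurwitz (!![-kd, -1, 0; 1, -(1 / R), -ki; 0, ki, 0] *
      Matrix.diagonal ![1 / L, 1 / C, 1 / ki]) := by
  intro μ hμ
  set A := ((!![-kd, -1, 0; 1, -(1 / R), -ki; 0, ki, 0] *
      Matrix.diagonal ![1 / L, 1 / C, 1 / ki]).map (Complex.ofReal)) with hA
  rw [spectrum.mem_iff] at hμ
  have hdet : (algebraMap ℂ (Matrix (Fin 3) (Fin 3) ℂ) μ - A).det = 0 := by
    by_contra h
    exact hμ ((Matrix.isUnit_iff_isUnit_det _).mpr (isUnit_iff_ne_zero.mpr h))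
  obtain ⟨v, hv0, hv⟩ := (Matrix.exists_mulVec_eq_zero_iff (A := ℂ)).mpr hdet
  have hv' : A.mulVec v = μ • v := by
    have h1 : (algebraMap ℂ (Matrix (Fin 3) (Fin 3) ℂ) μ).mulVec v = μ • v := by
      funext i
      simp [Matrix.algebraMap_eq_diagonal, Matrix.mulVec_diagonal,
        Pi.algebraMap_apply, Algebra.algebraMap_self_apply]
    rw [Matrix.sub_mulVec, h1, sub_eq_zero] at hv
    exact hv.symm
  have hki' : (ki:ℂ) ≠ 0 := Complex.ofReal_ne_zero.mpr hki.ne'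
  have hAe : A = !![(-(kd/L) : ℂ), -(1/C), 0; 1/L, -(1/(R*C)), -1; 0, ki/C, 0] := by
    rw [hA]
    ext i j
    fin_cases i <;> fin_cases j <;>
      simp [Matrix.mul_apply, Fin.sum_univ_three, Matrix.diagonal_apply, Matrix.map_apply,
        Matrix.vecMul, dotProduct, Matrix.vecHead, Matrix.vecTail] <;>
      first
        | ring1
        | exact mul_inv_cancel₀ hki'
        | exact div_self hki'
        | (push_cast; ring1)
        | (push_cast; field_simp)
  have h0 := congrFun hv' 0
  have h1 := congrFun hv' 1
  have h2 := congrFun hv' 2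
  rw [hAe] at h0 h1 h2
  simp [Matrix.mulVec, dotProduct, Fin.sum_univ_three] at h0 h1 h2
  rw [Complex.ext_iff] at h0 h1 h2
  obtain ⟨R0, I0⟩ := h0
  obtain ⟨R1, I1⟩ := h1
  obtain ⟨R2, I2⟩ := h2
  simp [Complex.mul_re, Complex.mul_im, Complex.add_re, Complex.add_im] at R0 I0 R1 I1 R2 I2
  set x0 := (v 0).re with hx0
  set y0 := (v 0).im with hy0
  set x1 := (v 1).re with hx1
  set y1 := (v 1).im with hy1
  set x2 := (v 2).re with hx2
  set y2 := (v 2).im with hy2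
  set p := μ.re with hp
  set q := μ.im with hq
  have hkiinv : ki * (1 / ki) = 1 := by field_simp
  have key : p * ((x0^2+y0^2)/L + (x1^2+y1^2)/C + (x2^2+y2^2)/ki)
      = -(kd/L^2)*(x0^2+y0^2) - (x1^2+y1^2)/(R*C^2) := by
    linear_combination (-(x0/L)) * R0 - (y0/L) * I0 - (x1/C) * R1 - (y1/C) * I1
      - (x2/ki) * R2 - (y2/ki) * I2 + ((x1*x2 + y1*y2)/C) * hkiinv
  by_cases hz : x0 = 0 ∧ y0 = 0 ∧ x1 = 0 ∧ y1 = 0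
  · exfalso
    obtain ⟨e1, e2, e3, e4⟩ := hz
    have ex2 : x2 = 0 := by rw [e1, e3, e4] at R1; linarith
    have ey2 : y2 = 0 := by rw [e2, e3, e4] at I1; linarith
    apply hv0
    funext i
    fin_cases i
    · exact Complex.ext e1 e2
    · exact Complex.ext e3 e4
    · exact Complex.ext ex2 ey2
  · have hpos : 0 < x0 ^ 2 + y0 ^ 2 + x1 ^ 2 + y1 ^ 2 := by
      rcases not_and_or.mp hz with h | h
      · positivity
      rcases not_and_or.mp h with h | h
      · positivity
      rcases not_and_or.mp h with h | h
      · positivity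
      · positivity
    have hn0 : (0:ℝ) ≤ x0 ^ 2 + y0 ^ 2 := by positivity
    have hn1 : (0:ℝ) ≤ x1 ^ 2 + y1 ^ 2 := by positivity
    have hW : 0 < (x0^2+y0^2)/L + (x1^2+y1^2)/C + (x2^2+y2^2)/ki := by
      have t2 : (0:ℝ) ≤ (x2^2+y2^2)/ki := by positivity
      rcases lt_or_ge 0 (x0^2+y0^2) with h | h
      · have t0 : 0 < (x0^2+y0^2)/L := div_pos h hL
        have t1 : (0:ℝ) ≤ (x1^2+y1^2)/C := by positivity
        linarith
      · have h1 : 0 < x1^2+y1^2 := by nlinarith [sq_nonneg x0, sq_nonneg y0]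
        have t1 : 0 < (x1^2+y1^2)/C := div_pos h1 hC
        have t0 : (0:ℝ) ≤ (x0^2+y0^2)/L := by positivity
        linarith
    have hRHS : -(kd/L^2)*(x0^2+y0^2) - (x1^2+y1^2)/(R*C^2) < 0 := by
      rcases lt_or_ge 0 (x0^2+y0^2) with h | h
      · have t0 : 0 < (kd/L^2)*(x0^2+y0^2) := mul_pos (by positivity) h
        have t1 : (0:ℝ) ≤ (x1^2+y1^2)/(R*C^2) := by positivity
        linarith
      · have h1 : 0 < x1^2+y1^2 := by nlinarith [sq_nonneg x0, sq_nonneg y0]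
        have t1 : 0 < (x1^2+y1^2)/(R*C^2) := div_pos h1 (by positivity)
        have t0 : (0:ℝ) ≤ (kd/L^2)*(x0^2+y0^2) := by positivity
        linarith
    by_contra hcon
    push_neg at hcon
    have : 0 ≤ p * ((x0^2+y0^2)/L + (x1^2+y1^2)/C + (x2^2+y2^2)/ki) :=
      mul_nonneg hcon hW.le
    linarith [key]
end

section
/- Consider χ̇ = M_0 ∇H_d(χ) with M_0 = [[−k_d, −1, 0],[1, −1/R, −k_i],[0, k_i, 0]] and H_d(χ) = ½(χ₁²/L + χ₂²/C + χ₃²/k_i), with k_d, k_i, R, L, C > 0. Then (a) dH_d/dt = −k_d χ₁²/L² − χ₂²/(RC²) ≤ 0 along solutions, and (b) the largest invariant set contained in {χ : χ₁ = χ₂ = 0} is {0}; hence by LaSalle's invariance principle the origin is globally asymptotically stable. -/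
open Filter

/-- `H_d(χ) = ½(χ₁²/L + χ₂²/C + χ₃²/k_i)`. -/
noncomputable def Hd (L C ki : ℝ) (c1 c2 c3 : ℝ) : ℝ :=
  (c1 ^ 2 / L + c2 ^ 2 / C + c3 ^ 2 / ki) / 2

/-- `χ` solves `χ̇ = M₀ ∇H_d(χ)` with
`M₀ = [[−k_d, −1, 0],[1, −1/R, −k_i],[0, k_i, 0]]` and `∇H_d = (χ₁/L, χ₂/C, χ₃/k_i)`. -/
def IsSol13 (kd ki R L C : ℝ) (c1 c2 c3 : ℝ → ℝ) : Prop :=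
  (∀ t, HasDerivAt c1 (-kd * (c1 t / L) - c2 t / C) t) ∧
  (∀ t, HasDerivAt c2 (c1 t / L - (1 / R) * (c2 t / C) - ki * (c3 t / ki)) t) ∧
  (∀ t, HasDerivAt c3 (ki * (c2 t / C)) t)

/-!
Along solutions `H_d` decreases at rate `k_d χ₁²/L² + χ₂²/(RC²)`, which does not control `χ₃`,
so `H_d` is only a weak Lyapunov function. Instead of LaSalle's principle we use the strict
Lyapunov function `W = H_d + ε χ₂ χ₃`: since `χ̇₂` contains `-χ₃`, the cross term contributes
`-ε χ₃²` to `Ẇ`, and for small `ε > 0` the remaining cross terms are absorbed by the dissipation.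
Then `H_d / 2 ≤ W ≤ 3 H_d / 2` and `Ẇ ≤ -γ H_d`, so `W`, hence `H_d` and `‖χ‖²`, decay
exponentially; this gives both Lyapunov stability and global attractivity.
-/

open Real

lemma sq_le_sq_norm_triple (x y z : ℝ) :
    x ^ 2 ≤ ‖(x, y, z)‖ ^ 2 ∧ y ^ 2 ≤ ‖(x, y, z)‖ ^ 2 ∧ z ^ 2 ≤ ‖(x, y, z)‖ ^ 2 := by
  refine ⟨sq_le_sq.2 ?_, sq_le_sq.2 ?_, sq_le_sq.2 ?_⟩ <;> rw [abs_norm]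
  · exact norm_fst_le (x, y, z)
  · exact (norm_fst_le (y, z)).trans (norm_snd_le (x, y, z))
  · exact (norm_snd_le (y, z)).trans (norm_snd_le (x, y, z))

lemma sq_norm_triple_le {x y z B : ℝ} (hx : x ^ 2 ≤ B) (hy : y ^ 2 ≤ B) (hz : z ^ 2 ≤ B) :
    ‖(x, y, z)‖ ^ 2 ≤ B := by
  rw [← Real.le_sqrt (norm_nonneg _) ((sq_nonneg x).trans hx)]
  exact norm_prod_le_iff.2 ⟨Real.abs_le_sqrt hx,
    norm_prod_le_iff.2 ⟨Real.abs_le_sqrt hy, Real.abs_le_sqrt hz⟩⟩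

lemma le_mul_exp_of_hasDerivAt_le_neg_mul {f f' : ℝ → ℝ} {α : ℝ}
    (hf : ∀ t, HasDerivAt f (f' t) t) (hle : ∀ t, f' t ≤ -α * f t) {t : ℝ} (ht : 0 ≤ t) :
    f t ≤ f 0 * exp (-α * t) := by
  have hexp : ∀ s, HasDerivAt (fun s => exp (α * s)) (exp (α * s) * α) s := fun s => by
    simpa using ((hasDerivAt_id s).const_mul α).exp
  have hanti : Antitone fun s => exp (α * s) * f s := by
    refine antitone_of_hasDerivAt_nonpos (fun s => (hexp s).mul (hf s)) fun s => ?_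
    have := mul_le_mul_of_nonneg_left (hle s) (exp_pos (α * s)).le
    rw [Pi.zero_apply]
    linarith
  have key : exp (α * t) * f t ≤ f 0 := by simpa using hanti ht
  calc f t = exp (-α * t) * (exp (α * t) * f t) := by
        rw [← mul_assoc, ← exp_add]; simp
    _ ≤ exp (-α * t) * f 0 := by gcongr
    _ = f 0 * exp (-α * t) := mul_comm _ _

section ExponentialDecay

variable {E : Type*} [SeminormedAddCommGroup E] {x : ℝ → E} {K α : ℝ}

lemma norm_lt_of_norm_le_mul_exp (hK : 0 < K) (hα : 0 ≤ α)
    (hx : ∀ t, 0 ≤ t → ‖x t‖ ≤ K * ‖x 0‖ * exp (-α * t)) {ε : ℝ} (h0 : ‖x 0‖ < ε / K)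
    {t : ℝ} (ht : 0 ≤ t) : ‖x t‖ < ε :=
  calc ‖x t‖ ≤ K * ‖x 0‖ * exp (-α * t) := hx t ht
    _ ≤ K * ‖x 0‖ := mul_le_of_le_one_right (by positivity) (exp_le_one_iff.2 (by nlinarith))
    _ < ε := (lt_div_iff₀' hK).1 h0

lemma tendsto_zero_of_norm_le_mul_exp (hα : 0 < α)
    (hx : ∀ t, 0 ≤ t → ‖x t‖ ≤ K * ‖x 0‖ * exp (-α * t)) : Tendsto x atTop (nhds 0) := by
  have hexp : Tendsto (fun t => exp (-α * t)) atTop (nhds 0) := by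
    refine (tendsto_exp_neg_atTop_nhds_zero.comp (tendsto_id.const_mul_atTop hα)).congr ?_
    simp [neg_mul]
  refine squeeze_zero_norm' ?_ (mul_zero (K * ‖x 0‖) ▸ hexp.const_mul _)
  filter_upwards [eventually_ge_atTop 0] with t ht using hx t ht

end ExponentialDecay

section BuckPID

variable {kd ki R L C : ℝ}

lemma sq_norm_le_Hd (hL : 0 < L) (hC : 0 < C) (hki : 0 < ki) (x y z : ℝ) :
    ‖(x, y, z)‖ ^ 2 ≤ 2 * (L + C + ki) * Hd L C ki x y z := by
  have hx : 0 ≤ x ^ 2 / L := by positivity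
  have hy : 0 ≤ y ^ 2 / C := by positivity
  have hz : 0 ≤ z ^ 2 / ki := by positivity
  have e : 2 * (L + C + ki) * Hd L C ki x y z
      = (L + C + ki) * (x ^ 2 / L + y ^ 2 / C + z ^ 2 / ki) := by unfold Hd; ring
  apply sq_norm_triple_le <;> rw [e]
  · calc x ^ 2 = L * (x ^ 2 / L) := by field_simp
      _ ≤ _ := by gcongr <;> linarith
  · calc y ^ 2 = C * (y ^ 2 / C) := by field_simp
      _ ≤ _ := by gcongr <;> linarith
  · calc z ^ 2 = ki * (z ^ 2 / ki) := by field_simp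
      _ ≤ _ := by gcongr <;> linarith

lemma Hd_le_sq_norm (hL : 0 < L) (hC : 0 < C) (hki : 0 < ki) (x y z : ℝ) :
    Hd L C ki x y z ≤ (L⁻¹ + C⁻¹ + ki⁻¹) / 2 * ‖(x, y, z)‖ ^ 2 := by
  obtain ⟨hx, hy, hz⟩ := sq_le_sq_norm_triple x y z
  calc Hd L C ki x y z
      ≤ (‖(x, y, z)‖ ^ 2 / L + ‖(x, y, z)‖ ^ 2 / C + ‖(x, y, z)‖ ^ 2 / ki) / 2 := by
        unfold Hd; gcongr
    _ = (L⁻¹ + C⁻¹ + ki⁻¹) / 2 * ‖(x, y, z)‖ ^ 2 := by ring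

lemma dissipation_nonpos (hkd : 0 ≤ kd) (hR : 0 ≤ R) (x y : ℝ) :
    -kd * x ^ 2 / L ^ 2 - y ^ 2 / (R * C ^ 2) ≤ 0 := by
  have : 0 ≤ kd * x ^ 2 / L ^ 2 + y ^ 2 / (R * C ^ 2) := by positivity
  linear_combination this

namespace IsSol13

variable {c1 c2 c3 : ℝ → ℝ}

lemma hasDerivAt_Hd (hki : ki ≠ 0) (h : IsSol13 kd ki R L C c1 c2 c3) (t : ℝ) :
    HasDerivAt (fun s => Hd L C ki (c1 s) (c2 s) (c3 s))
      (-kd * c1 t ^ 2 / L ^ 2 - c2 t ^ 2 / (R * C ^ 2)) t := by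
  obtain ⟨h1, h2, h3⟩ := h
  refine (((((h1 t).pow 2).div_const L).add (((h2 t).pow 2).div_const C)).add
    (((h3 t).pow 2).div_const ki)).div_const 2 |>.congr_deriv ?_
  rw [mul_div_cancel₀ _ hki]
  field_simp
  ring

lemma hasDerivAt_c2_mul_c3 (hki : ki ≠ 0) (h : IsSol13 kd ki R L C c1 c2 c3) (t : ℝ) :
    HasDerivAt (fun s => c2 s * c3 s)
      (c1 t * c3 t / L - c2 t * c3 t / (R * C) - c3 t ^ 2 + ki * c2 t ^ 2 / C) t := by
  refine ((h.2.1 t).mul (h.2.2 t)).congr_deriv ?_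
  rw [mul_div_cancel₀ _ hki]
  ring

lemma c3_eq_zero (hki : ki ≠ 0) (h : IsSol13 kd ki R L C c1 c2 c3) (hc2 : ∀ s, c2 s = 0)
    {t : ℝ} (hc1 : c1 t = 0) : c3 t = 0 := by
  have h0 : HasDerivAt c2 0 t := by
    rw [funext hc2]
    exact hasDerivAt_const t 0
  have := (h.2.1 t).unique h0
  rw [hc1, hc2, mul_div_cancel₀ _ hki] at this
  simpa using this

end IsSol13

lemma abs_cross_le_half_Hd (hL : 0 < L) {ε : ℝ} (hε : 0 ≤ ε)
    (hεC : ε ≤ 1 / (2 * C)) (hεki : ε ≤ 1 / (2 * ki)) (x y z : ℝ) :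
    |ε * (y * z)| ≤ Hd L C ki x y z / 2 := by
  have hyz : 2 * |y * z| ≤ y ^ 2 + z ^ 2 := by
    rw [abs_mul, ← sq_abs y, ← sq_abs z, ← mul_assoc]
    exact two_mul_le_add_sq |y| |z|
  have hy : ε * y ^ 2 ≤ y ^ 2 / C / 2 :=
    (mul_le_mul_of_nonneg_right hεC (sq_nonneg y)).trans_eq (by ring)
  have hz : ε * z ^ 2 ≤ z ^ 2 / ki / 2 :=
    (mul_le_mul_of_nonneg_right hεki (sq_nonneg z)).trans_eq (by ring)
  have hx : 0 ≤ x ^ 2 / L := by positivity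
  rw [abs_mul, abs_of_nonneg hε]
  calc ε * |y * z| ≤ ε * (y ^ 2 + z ^ 2) / 2 := by nlinarith
    _ ≤ Hd L C ki x y z / 2 := by unfold Hd; linarith

lemma dissipation_add_cross_rate_le (hC : 0 < C) (hR : 0 < R) (hki : 0 < ki)
    {ε : ℝ} (hε : 0 ≤ ε) (hεkd : ε ≤ kd / 2) (hεR : ε * (1 + R ^ 2 * C * ki) ≤ R / 2)
    (x y z : ℝ) :
    -kd * x ^ 2 / L ^ 2 - y ^ 2 / (R * C ^ 2)
        + ε * (x * z / L - y * z / (R * C) - z ^ 2 + ki * y ^ 2 / C)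
      ≤ -(kd * x ^ 2 / (2 * L ^ 2) + y ^ 2 / (2 * R * C ^ 2) + ε * z ^ 2 / 2) := by
  -- the two indefinite cross terms are absorbed by Young's inequality
  have h1 := mul_nonneg hε (sq_nonneg (x / L - z / 2))
  have h2 := mul_nonneg hε (sq_nonneg (y / (R * C) + z / 2))
  have h3 := mul_le_mul_of_nonneg_right hεkd (sq_nonneg (x / L))
  have h4 := mul_le_mul_of_nonneg_right hεR (sq_nonneg (y / (R * C)))
  have e1 : ε * (1 + R ^ 2 * C * ki) * (y / (R * C)) ^ 2
      = ε * (y / (R * C)) ^ 2 + ε * (ki * y ^ 2 / C) := by field_simp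
  have e2 : R / 2 * (y / (R * C)) ^ 2 = y ^ 2 / (2 * R * C ^ 2) := by field_simp
  rw [e1, e2] at h4
  linear_combination h1 + h2 + h3 + h4

lemma mul_Hd_le_dissipation (hL : 0 < L) (hC : 0 < C) (hki : 0 < ki) {ε γ : ℝ}
    (hγkd : γ ≤ kd / L) (hγR : γ ≤ 1 / (R * C)) (hγε : γ ≤ ε * ki) (x y z : ℝ) :
    γ * Hd L C ki x y z
      ≤ kd * x ^ 2 / (2 * L ^ 2) + y ^ 2 / (2 * R * C ^ 2) + ε * z ^ 2 / 2 := by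
  have h1 := mul_le_mul_of_nonneg_right hγkd (by positivity : 0 ≤ x ^ 2 / L)
  have h2 := mul_le_mul_of_nonneg_right hγR (by positivity : 0 ≤ y ^ 2 / C)
  have h3 := mul_le_mul_of_nonneg_right hγε (by positivity : 0 ≤ z ^ 2 / ki)
  have e3 : ε * ki * (z ^ 2 / ki) = ε * z ^ 2 := by field_simp
  rw [e3] at h3
  unfold Hd
  linear_combination (h1 + h2 + h3) / 2

lemma exists_strictLyapunov (hkd : 0 < kd) (hki : 0 < ki) (hR : 0 < R) (hL : 0 < L)
    (hC : 0 < C) :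
    ∃ ε γ : ℝ, 0 < γ ∧ (∀ x y z, |ε * (y * z)| ≤ Hd L C ki x y z / 2) ∧
      ∀ x y z, -kd * x ^ 2 / L ^ 2 - y ^ 2 / (R * C ^ 2)
        + ε * (x * z / L - y * z / (R * C) - z ^ 2 + ki * y ^ 2 / C)
          ≤ -γ * Hd L C ki x y z := by
  set ε := min (min (1 / (2 * C)) (1 / (2 * ki))) (min (kd / 2) (R / 2 / (1 + R ^ 2 * C * ki)))
  have hε : 0 < ε := by positivity
  have hεR : ε * (1 + R ^ 2 * C * ki) ≤ R / 2 :=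
    (le_div_iff₀ (by positivity)).1 ((min_le_right _ _).trans (min_le_right _ _))
  set γ := min (min (kd / L) (1 / (R * C))) (ε * ki)
  refine ⟨ε, γ, by positivity, fun x y z => ?_, fun x y z => ?_⟩
  · exact abs_cross_le_half_Hd hL hε.le ((min_le_left _ _).trans (min_le_left _ _))
      ((min_le_left _ _).trans (min_le_right _ _)) x y z
  · have := dissipation_add_cross_rate_le (L := L) hC hR hki hε.le
      ((min_le_right _ _).trans (min_le_left _ _)) hεR x y z
    have := mul_Hd_le_dissipation (kd := kd) (R := R) (ε := ε) hL hC hki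
      ((min_le_left _ _).trans (min_le_left _ _)) ((min_le_left _ _).trans (min_le_right _ _))
      (min_le_right _ _) x y z
    linarith

lemma IsSol13.sq_norm_le_exp {c1 c2 c3 : ℝ → ℝ} (hki : 0 < ki) (hL : 0 < L) (hC : 0 < C)
    (h : IsSol13 kd ki R L C c1 c2 c3) {ε γ : ℝ} (hγ : 0 < γ)
    (hcross : ∀ x y z, |ε * (y * z)| ≤ Hd L C ki x y z / 2)
    (hdiss : ∀ x y z, -kd * x ^ 2 / L ^ 2 - y ^ 2 / (R * C ^ 2)
        + ε * (x * z / L - y * z / (R * C) - z ^ 2 + ki * y ^ 2 / C)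
          ≤ -γ * Hd L C ki x y z) {t : ℝ} (ht : 0 ≤ t) :
    ‖(c1 t, c2 t, c3 t)‖ ^ 2 ≤ 3 * (L + C + ki) * (L⁻¹ + C⁻¹ + ki⁻¹) *
      ‖(c1 0, c2 0, c3 0)‖ ^ 2 * exp (-(2 * γ / 3) * t) := by
  set H := fun s => Hd L C ki (c1 s) (c2 s) (c3 s)
  set W := fun s => H s + ε * (c2 s * c3 s)
  have hHW : ∀ s, H s / 2 ≤ W s ∧ W s ≤ 3 * H s / 2 := fun s => by
    have := abs_le.1 (hcross (c1 s) (c2 s) (c3 s))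
    constructor <;> linarith
  have hW : ∀ s, HasDerivAt W _ s := fun s =>
    (h.hasDerivAt_Hd hki.ne' s).add ((h.hasDerivAt_c2_mul_c3 hki.ne' s).const_mul ε)
  have hdecay : W t ≤ W 0 * exp (-(2 * γ / 3) * t) := by
    refine le_mul_exp_of_hasDerivAt_le_neg_mul hW (fun s => ?_) ht
    have := mul_le_mul_of_nonneg_left (hHW s).2 hγ.le
    linarith [hdiss (c1 s) (c2 s) (c3 s)]
  calc ‖(c1 t, c2 t, c3 t)‖ ^ 2 ≤ 2 * (L + C + ki) * H t := sq_norm_le_Hd hL hC hki _ _ _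
    _ ≤ 2 * (L + C + ki) * (2 * W t) := by gcongr; linarith [hHW t]
    _ ≤ 2 * (L + C + ki) * (2 * (W 0 * exp (-(2 * γ / 3) * t))) := by gcongr
    _ ≤ 2 * (L + C + ki) * (2 * (3 * H 0 / 2 * exp (-(2 * γ / 3) * t))) := by
        gcongr; exact (hHW 0).2
    _ ≤ 2 * (L + C + ki) * (2 * (3 * ((L⁻¹ + C⁻¹ + ki⁻¹) / 2 * ‖(c1 0, c2 0, c3 0)‖ ^ 2) / 2
          * exp (-(2 * γ / 3) * t))) := by
        gcongr; exact Hd_le_sq_norm hL hC hki _ _ _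
    _ = _ := by ring

lemma exists_norm_le_mul_exp (hkd : 0 < kd) (hki : 0 < ki) (hR : 0 < R) (hL : 0 < L)
    (hC : 0 < C) :
    ∃ K α : ℝ, 0 < K ∧ 0 < α ∧ ∀ c1 c2 c3 : ℝ → ℝ, IsSol13 kd ki R L C c1 c2 c3 →
      ∀ t, 0 ≤ t → ‖(c1 t, c2 t, c3 t)‖ ≤ K * ‖(c1 0, c2 0, c3 0)‖ * exp (-α * t) := by
  obtain ⟨ε, γ, hγ, hcross, hdiss⟩ := exists_strictLyapunov hkd hki hR hL hC
  refine ⟨√(3 * (L + C + ki) * (L⁻¹ + C⁻¹ + ki⁻¹)), γ / 3, by positivity, by positivity,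
    fun c1 c2 c3 h t ht => ?_⟩
  rw [← sq_le_sq₀ (norm_nonneg _) (by positivity)]
  refine (h.sq_norm_le_exp hki hL hC hγ hcross hdiss ht).trans_eq ?_
  rw [mul_pow, mul_pow, Real.sq_sqrt (by positivity), ← exp_nat_mul]
  ring_nf

end BuckPID

theorem stmt13 (kd ki R L C : ℝ) (hkd : 0 < kd) (hki : 0 < ki) (hR : 0 < R)
    (hL : 0 < L) (hC : 0 < C) :
    -- (a) energy decay: `dH_d/dt = −k_d χ₁²/L² − χ₂²/(RC²) ≤ 0`
    (∀ c1 c2 c3 : ℝ → ℝ, IsSol13 kd ki R L C c1 c2 c3 → ∀ t,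
      HasDerivAt (fun s => Hd L C ki (c1 s) (c2 s) (c3 s))
        (-kd * (c1 t) ^ 2 / L ^ 2 - (c2 t) ^ 2 / (R * C ^ 2)) t ∧
      -kd * (c1 t) ^ 2 / L ^ 2 - (c2 t) ^ 2 / (R * C ^ 2) ≤ 0) ∧
    -- (b) the largest invariant set contained in `{χ₁ = χ₂ = 0}` is `{0}`:
    -- any solution remaining in that set is identically zero
    (∀ c1 c2 c3 : ℝ → ℝ, IsSol13 kd ki R L C c1 c2 c3 →
      (∀ t, c1 t = 0 ∧ c2 t = 0) → ∀ t, c1 t = 0 ∧ c2 t = 0 ∧ c3 t = 0) ∧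
    -- LaSalle conclusion: the origin is globally asymptotically stable
    (∀ ε > 0, ∃ δ > 0, ∀ c1 c2 c3 : ℝ → ℝ, IsSol13 kd ki R L C c1 c2 c3 →
      ‖(c1 0, c2 0, c3 0)‖ < δ → ∀ t ≥ 0, ‖(c1 t, c2 t, c3 t)‖ < ε) ∧
    (∀ c1 c2 c3 : ℝ → ℝ, IsSol13 kd ki R L C c1 c2 c3 →
      Tendsto (fun t => (c1 t, c2 t, c3 t)) atTop (nhds (0, 0, 0))) := by
  obtain ⟨K, α, hK, hα, hdecay⟩ := exists_norm_le_mul_exp hkd hki hR hL hC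
  refine ⟨fun c1 c2 c3 h t => ⟨h.hasDerivAt_Hd hki.ne' t, dissipation_nonpos hkd.le hR.le _ _⟩,
    fun c1 c2 c3 h hz t => ⟨(hz t).1, (hz t).2, h.c3_eq_zero hki.ne' (fun s => (hz s).2) (hz t).1⟩,
    fun ε hε => ⟨ε / K, by positivity, fun c1 c2 c3 h h0 t ht =>
      norm_lt_of_norm_le_mul_exp hK hα.le (hdecay c1 c2 c3 h) h0 ht⟩,
    fun c1 c2 c3 h => tendsto_zero_of_norm_le_mul_exp hα (hdecay c1 c2 c3 h)⟩
end

section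
/- Let the closed-loop system of Proposition 3 be ξ̇ = k_i(Q − Q_r)/C together with the equivalent-buck dynamics φ̇_T = −Q/C + E_eq μ, Q̇ = φ_T/L − Q/(RC), where μ = −(1/E_eq)(k_d φ_T/L + k_d ξ + L k_i (Q − Q_r)/C). Then the linear change of coordinates χ₁ = (φ_T − LQ_r/(RC)) + L(ξ − ξ*), χ₂ = Q − Q_r, χ₃ = ξ − ξ*, with ξ* = (−1/k_d − 1/R)Q_r/C, transforms the closed loop exactly into χ̇ = [[−k_d, −1, 0],[1, −1/R, −k_i],[0, k_i, 0]] ∇H_d(χ), where H_d(χ) = ½(χ₁²/L + χ₂²/C + χ₃²/k_i). -/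
/-!
The change of coordinates is affine, so `χ̇` is the image of the closed-loop vector field under
its linear part, and each row of the claim reduces to an identity of rational functions of the
state `(φ_T, Q, ξ)`. The value of `ξ*` is exactly what makes the constant terms cancel in the
first row, i.e. it places the equilibrium of the closed loop at `χ = 0`.
-/

section BuckClosedLoop

variable {L C R Eeq kd ki Qr : ℝ}

theorem closedLoop_flux_rate_eq (hL : L ≠ 0) (hEeq : Eeq ≠ 0) (hkd : kd ≠ 0) (φ Q ξ : ℝ) :
    -Q / C + Eeq * (-(1 / Eeq) * (kd * φ / L + kd * ξ + L * ki * (Q - Qr) / C))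
        + L * (ki * (Q - Qr) / C) =
      -kd * (((φ - L * Qr / (R * C)) + L * (ξ - (-(1 / kd) - 1 / R) * Qr / C)) / L)
        - (Q - Qr) / C := by
  field_simp
  ring

theorem closedLoop_charge_rate_eq (hL : L ≠ 0) (hki : ki ≠ 0) (ξstar φ Q ξ : ℝ) :
    φ / L - Q / (R * C) =
      ((φ - L * Qr / (R * C)) + L * (ξ - ξstar)) / L - (1 / R) * ((Q - Qr) / C)
        - ki * ((ξ - ξstar) / ki) := by
  field_simp
  ring

end BuckClosedLoop

theorem stmt14_general (L C R Eeq kd ki Qr : ℝ) (hL : 0 < L)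
    (hEeq : 0 < Eeq) (hkd : 0 < kd) (hki : 0 < ki)
    (φT Q ξ : ℝ → ℝ)
    -- closed loop: `φ̇_T = −Q/C + E_eq μ` with
    -- `μ = −(1/E_eq)(k_d φ_T/L + k_d ξ + L k_i (Q − Q_r)/C)`
    (hφT : ∀ t, HasDerivAt φT
      (-(Q t) / C + Eeq * (-(1 / Eeq) *
        (kd * φT t / L + kd * ξ t + L * ki * (Q t - Qr) / C))) t)
    -- `Q̇ = φ_T/L − Q/(RC)`
    (hQ : ∀ t, HasDerivAt Q (φT t / L - Q t / (R * C)) t)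
    -- `ξ̇ = k_i (Q − Q_r)/C`
    (hξ : ∀ t, HasDerivAt ξ (ki * (Q t - Qr) / C) t)
    (ξstar : ℝ) (hξstar : ξstar = (-(1 / kd) - 1 / R) * Qr / C)
    (χ1 χ2 χ3 : ℝ → ℝ)
    (hχ1 : ∀ t, χ1 t = (φT t - L * Qr / (R * C)) + L * (ξ t - ξstar))
    (hχ2 : ∀ t, χ2 t = Q t - Qr)
    (hχ3 : ∀ t, χ3 t = ξ t - ξstar) :
    -- the transformed dynamics is exactly
    -- `χ̇ = [[−k_d,−1,0],[1,−1/R,−k_i],[0,k_i,0]] ∇H_d(χ)` with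
    -- `∇H_d(χ) = (χ₁/L, χ₂/C, χ₃/k_i)`
    (∀ t, HasDerivAt χ1 (-kd * (χ1 t / L) - χ2 t / C) t) ∧
    (∀ t, HasDerivAt χ2 (χ1 t / L - (1 / R) * (χ2 t / C) - ki * (χ3 t / ki)) t) ∧
    (∀ t, HasDerivAt χ3 (ki * (χ2 t / C)) t) := by
  obtain rfl : χ1 = fun t => (φT t - L * Qr / (R * C)) + L * (ξ t - ξstar) := funext hχ1
  obtain rfl : χ2 = fun t => Q t - Qr := funext hχ2
  obtain rfl : χ3 = fun t => ξ t - ξstar := funext hχ3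
  refine ⟨fun t => ?_, fun t => ?_, fun t => ?_⟩
  · have hχ1' := ((hφT t).sub_const (L * Qr / (R * C))).add (((hξ t).sub_const ξstar).const_mul L)
    subst hξstar
    exact hχ1'.congr_deriv
      (closedLoop_flux_rate_eq hL.ne' hEeq.ne' hkd.ne' (φT t) (Q t) (ξ t))
  · exact ((hQ t).sub_const Qr).congr_deriv
      (closedLoop_charge_rate_eq hL.ne' hki.ne' ξstar (φT t) (Q t) (ξ t))
  · exact ((hξ t).sub_const ξstar).congr_deriv (mul_div_assoc ..)

theorem stmt14 (L C R Eeq kd ki Qr : ℝ) (hL : 0 < L) (hC : 0 < C) (hR : 0 < R)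
    (hEeq : 0 < Eeq) (hkd : 0 < kd) (hki : 0 < ki)
    (φT Q ξ : ℝ → ℝ)
    -- closed loop: `φ̇_T = −Q/C + E_eq μ` with
    -- `μ = −(1/E_eq)(k_d φ_T/L + k_d ξ + L k_i (Q − Q_r)/C)`
    (hφT : ∀ t, HasDerivAt φT
      (-(Q t) / C + Eeq * (-(1 / Eeq) *
        (kd * φT t / L + kd * ξ t + L * ki * (Q t - Qr) / C))) t)
    -- `Q̇ = φ_T/L − Q/(RC)`
    (hQ : ∀ t, HasDerivAt Q (φT t / L - Q t / (R * C)) t)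
    -- `ξ̇ = k_i (Q − Q_r)/C`
    (hξ : ∀ t, HasDerivAt ξ (ki * (Q t - Qr) / C) t)
    (ξstar : ℝ) (hξstar : ξstar = (-(1 / kd) - 1 / R) * Qr / C)
    (χ1 χ2 χ3 : ℝ → ℝ)
    (hχ1 : ∀ t, χ1 t = (φT t - L * Qr / (R * C)) + L * (ξ t - ξstar))
    (hχ2 : ∀ t, χ2 t = Q t - Qr)
    (hχ3 : ∀ t, χ3 t = ξ t - ξstar) :
    -- the transformed dynamics is exactly
    -- `χ̇ = [[−k_d,−1,0],[1,−1/R,−k_i],[0,k_i,0]] ∇H_d(χ)` with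
    -- `∇H_d(χ) = (χ₁/L, χ₂/C, χ₃/k_i)`
    (∀ t, HasDerivAt χ1 (-kd * (χ1 t / L) - χ2 t / C) t) ∧
    (∀ t, HasDerivAt χ2 (χ1 t / L - (1 / R) * (χ2 t / C) - ki * (χ3 t / ki)) t) ∧
    (∀ t, HasDerivAt χ3 (ki * (χ2 t / C)) t) :=
  stmt14_general L C R Eeq kd ki Qr hL hEeq hkd hki φT Q ξ hφT hQ hξ ξstar hξstar χ1 χ2 χ3 hχ1 hχ2
    hχ3
end

section
/- Let f : ℝ^n × ℝ → ℝ be such that f(·, v) is C¹ and strictly convex with minimizer x*(v) for each fixed v, and define h(x̃, ṽ) := ∇_x f(x̃ + x*, v* + ṽ) − ∇_x f(x̃ + x*, v*) for fixed v*. Suppose ‖h(x̃, ṽ)‖ ≤ G₁(|ṽ|) + G₂(|ṽ|)‖x̃‖ with G₁, G₂ strictly increasing, continuous, and vanishing at 0. If ṽ(t) → 0 and is bounded, and x̃ solves x̃̇ = −K∇_x f(x̃ + x*, v*) − K h(x̃, ṽ(t)) with K ≻ 0, and W(x̃) := f(x̃ + x*, v*) − f(x*, v*) satisfies ‖∇W(x̃)‖‖x̃‖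 ≤ k W(x̃) for ‖x̃‖ > c, then x̃(t) is bounded for all t ≥ 0. -/
/-!
Strict convexity of `f(·, v*)` and minimality of `x*` make `⟪∇ₓf(u + x*, v*), u⟫` positive on the
unit sphere, hence at least some `β > 0` there by compactness. Once `ṽ(t)` is small, F1) keeps the
perturbed gradient `∇ₓf(·, v* + ṽ(t))` within `β` of it on the sphere, so it still points outward
there; as radial derivatives of the convex function `f(·, v* + ṽ(t))` are nondecreasing, it points
outward on the whole exterior of the unit ball. The dynamics read `x̃̇ = -K ∇ₓf(x̃ + x*, v* + ṽ)`,
so `⟪K⁻¹ x̃, x̃⟫` is nonincreasing while `x̃` is outside the ball, which bounds `x̃` for large `t`;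
continuity bounds it on the remaining compact time interval.
-/

open Filter Set
open scoped RealInnerProductSpace Gradient

section Convex

variable {E : Type*} [NormedAddCommGroup E] [InnerProductSpace ℝ E] [CompleteSpace E]
  {φ ψ : E → ℝ}

theorem ConvexOn.sub_le_inner_gradient (hc : ConvexOn ℝ univ φ) {b : E}
    (hb : DifferentiableAt ℝ φ b) (a : E) :
    φ b - φ a ≤ ⟪∇ φ b, b - a⟫ := by
  have hline : ConvexOn ℝ univ (fun θ : ℝ => φ (AffineMap.lineMap a b θ)) := by
    simpa [Function.comp_def] using hc.comp_affineMap (AffineMap.lineMap a b)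
  have hderiv : HasDerivAt (fun θ : ℝ => φ (AffineMap.lineMap a b θ)) ⟪∇ φ b, b - a⟫ 1 := by
    have hb' : DifferentiableAt ℝ φ (AffineMap.lineMap a b (1 : ℝ)) := by simpa using hb
    have := hb'.hasGradientAt.hasFDerivAt.comp_hasDerivAt (1 : ℝ) AffineMap.hasDerivAt_lineMap
    simpa [InnerProductSpace.toDual_apply_apply, Function.comp_def] using this
  simpa [slope_def_field] using
    hline.slope_le_of_hasDerivAt (mem_univ 0) (mem_univ 1) one_pos hderiv

theorem ConvexOn.inner_gradient_sub_nonneg (hc : ConvexOn ℝ univ φ) {x y : E}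
    (hx : DifferentiableAt ℝ φ x) (hy : DifferentiableAt ℝ φ y) :
    0 ≤ ⟪∇ φ x - ∇ φ y, x - y⟫ := by
  have h₁ := hc.sub_le_inner_gradient hx y
  have h₂ := hc.sub_le_inner_gradient hy x
  rw [← neg_sub x y, inner_neg_right] at h₂
  rw [inner_sub_left]
  linarith

theorem ConvexOn.inner_gradient_add_smul_le (hc : ConvexOn ℝ univ φ) (hφ : Differentiable ℝ φ)
    (a u : E) {s t : ℝ} (hst : s ≤ t) :
    ⟪∇ φ (s • u + a), u⟫ ≤ ⟪∇ φ (t • u + a), u⟫ := by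
  have h := hc.inner_gradient_sub_nonneg (hφ (t • u + a)) (hφ (s • u + a))
  rw [add_sub_add_right_eq_sub, ← sub_smul, real_inner_smul_right, inner_sub_left] at h
  rcases hst.lt_or_eq with hlt | rfl
  · linarith [nonneg_of_mul_nonneg_right h (sub_pos.mpr hlt)]
  · rfl

theorem ConvexOn.inner_gradient_nonneg_of_one_le_norm (hc : ConvexOn ℝ univ φ)
    (hφ : Differentiable ℝ φ) {a : E} (hsphere : ∀ u : E, ‖u‖ = 1 → 0 ≤ ⟪∇ φ (u + a), u⟫)
    {x : E} (hx : 1 ≤ ‖x‖) :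
    0 ≤ ⟪∇ φ (x + a), x⟫ := by
  have hx₀ : ‖x‖ ≠ 0 := by positivity
  set u := ‖x‖⁻¹ • x
  have hu : ‖u‖ = 1 := by simp [u, norm_smul, hx₀]
  have hxu : x = ‖x‖ • u := by simp [u, smul_smul, hx₀]
  have hmono := hc.inner_gradient_add_smul_le hφ a u hx
  rw [one_smul, ← hxu] at hmono
  rw [hxu, real_inner_smul_right, ← hxu]
  exact mul_nonneg (norm_nonneg x) ((hsphere u hu).trans hmono)

theorem ConvexOn.inner_gradient_nonneg_of_norm_gradient_sub_le (hc : ConvexOn ℝ univ ψ)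
    (hψ : Differentiable ℝ ψ) {a : E} {β : ℝ}
    (hφ : ∀ u : E, ‖u‖ = 1 → β ≤ ⟪∇ φ (u + a), u⟫)
    (hclose : ∀ u : E, ‖u‖ = 1 → ‖∇ ψ (u + a) - ∇ φ (u + a)‖ ≤ β)
    {x : E} (hx : 1 ≤ ‖x‖) :
    0 ≤ ⟪∇ ψ (x + a), x⟫ := by
  refine hc.inner_gradient_nonneg_of_one_le_norm hψ (fun u hu => ?_) hx
  have hcs := real_inner_le_norm (∇ φ (u + a) - ∇ ψ (u + a)) u
  rw [← norm_neg, neg_sub, hu, mul_one, inner_sub_left] at hcs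
  linarith [hφ u hu, hclose u hu]

theorem ContDiff.continuous_gradient (hφ : ContDiff ℝ 1 φ) : Continuous (∇ φ) :=
  (InnerProductSpace.toDual ℝ E).symm.continuous.comp (hφ.continuous_fderiv one_ne_zero)

theorem StrictConvexOn.exists_pos_le_inner_gradient_sphere [FiniteDimensional ℝ E]
    (hc : StrictConvexOn ℝ univ φ) (hφ : ContDiff ℝ 1 φ) {a : E} (ha : IsMinOn φ univ a) :
    ∃ β > 0, ∀ u : E, ‖u‖ = 1 → β ≤ ⟪∇ φ (u + a), u⟫ := by
  have hpos : ∀ u ∈ Metric.sphere (0 : E) 1, 0 < ⟪∇ φ (u + a), u⟫ := by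
    intro u hu
    have hu₀ : u ≠ 0 := ne_zero_of_mem_unit_sphere ⟨u, hu⟩
    have hlt : φ a < φ (u + a) := by
      by_contra! hle
      have hmin : IsMinOn φ univ (u + a) := fun z _ => hle.trans (ha (mem_univ z))
      exact hu₀ (add_eq_right.mp (hc.eq_of_isMinOn hmin ha (mem_univ _) (mem_univ _)))
    have := hc.convexOn.sub_le_inner_gradient ((hφ.differentiable one_ne_zero) (u + a)) a
    rw [add_sub_cancel_right] at this
    linarith
  have hcont : Continuous fun u : E => ⟪∇ φ (u + a), u⟫ :=
    (hφ.continuous_gradient.comp (continuous_add_const a)).inner continuous_id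
  obtain ⟨β, hβ, hle⟩ := (isCompact_sphere (0 : E) 1).exists_forall_le' hcont.continuousOn hpos
  exact ⟨β, hβ, fun u hu => hle u (by simpa using hu)⟩

end Convex

theorem le_max_of_hasDerivAt_nonpos_of_lt {ρ ρ' : ℝ → ℝ} {T L : ℝ}
    (hρ : ∀ t, HasDerivAt ρ (ρ' t) t) (hdec : ∀ t ≥ T, L < ρ t → ρ' t ≤ 0)
    {t : ℝ} (ht : T ≤ t) :
    ρ t ≤ max (ρ T) L := by
  set M := max (ρ T) L
  refine le_of_forall_pos_le_add fun δ hδ => ?_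
  set ε := δ / (t - T + 1)
  have hε : 0 < ε := div_pos hδ (by linarith)
  -- `ρ` cannot cross the line `M + ε (s - T + 1)`: where they meet, `ρ > L`, so `ρ' ≤ 0 < ε`
  have hline : ∀ s, HasDerivAt (fun s => M + ε * (s - T + 1)) ε s := fun s =>
    ((((hasDerivAt_id s).sub_const T).add_const 1).const_mul ε).const_add M |>.congr_deriv
      (mul_one ε)
  have hstart : ρ T ≤ M + ε * (T - T + 1) := by
    rw [sub_self, zero_add, mul_one]
    linarith [le_max_left (ρ T) L]
  have hfence := image_le_of_deriv_right_lt_deriv_boundary (a := T) (b := t)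
    (fun s _ => (hρ s).continuousAt.continuousWithinAt) (fun s _ => (hρ s).hasDerivWithinAt)
    hstart hline
    (fun s hs _ => (hdec s hs.1 (by nlinarith [le_max_right (ρ T) L, hs.1])).trans_lt hε)
    (right_mem_Icc.mpr ht)
  calc ρ t ≤ M + ε * (t - T + 1) := hfence
    _ = M + δ := by rw [div_mul_cancel₀ _ (by linarith)]

section Lyapunov

variable {E : Type*} [NormedAddCommGroup E] [InnerProductSpace ℝ E] [FiniteDimensional ℝ E]

theorem exists_pos_mul_sq_le_inner_self (A : E →ₗ[ℝ] E) (hA : ∀ u, u ≠ 0 → 0 < ⟪A u, u⟫) :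
    ∃ μ > 0, ∀ x : E, μ * ‖x‖ ^ 2 ≤ ⟪A x, x⟫ := by
  have hcont : Continuous fun u : E => ⟪A u, u⟫ :=
    A.continuous_of_finiteDimensional.inner continuous_id
  obtain ⟨μ, hμ, hle⟩ := (isCompact_sphere (0 : E) 1).exists_forall_le' hcont.continuousOn
    fun u hu => hA u (ne_zero_of_mem_unit_sphere ⟨u, hu⟩)
  refine ⟨μ, hμ, fun x => ?_⟩
  rcases eq_or_ne x 0 with rfl | hx
  · simp
  have hx₀ : ‖x‖ ≠ 0 := norm_ne_zero_iff.mpr hx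
  have hu := hle (‖x‖⁻¹ • x) (by simp [norm_smul, hx₀])
  rwa [map_smul, real_inner_smul_left, real_inner_smul_right, ← mul_assoc, ← sq,
    inv_pow, le_inv_mul_iff₀ (by positivity), mul_comm] at hu

theorem exists_norm_le_of_hasDerivAt_neg_apply (K : E →ₗ[ℝ] E)
    (hKsymm : ∀ u v, ⟪K u, v⟫ = ⟪u, K v⟫) (hKpos : ∀ u, u ≠ 0 → 0 < ⟪K u, u⟫)
    {x g : ℝ → E} (hx : ∀ t, HasDerivAt x (-K (g t)) t) {T : ℝ}
    (hg : ∀ t ≥ T, 1 ≤ ‖x t‖ → 0 ≤ ⟪x t, g t⟫) :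
    ∃ M, ∀ t ≥ T, ‖x t‖ ≤ M := by
  have hKinj : Function.Injective K := by
    refine (injective_iff_map_eq_zero K).mpr fun u hu => ?_
    by_contra hu₀
    simpa [hu] using hKpos u hu₀
  set Q : E →L[ℝ] E :=
    ((LinearEquiv.ofInjectiveEndo K hKinj).symm.toContinuousLinearEquiv : E →L[ℝ] E)
  have hKQ : ∀ y, K (Q y) = y := (LinearEquiv.ofInjectiveEndo K hKinj).apply_symm_apply
  have hQK : ∀ y, Q (K y) = y := (LinearEquiv.ofInjectiveEndo K hKinj).symm_apply_apply
  have hQpos : ∀ y, y ≠ 0 → 0 < ⟪Q y, y⟫ := by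
    intro y hy
    have := hKpos (Q y) (fun h => hy (by rw [← hKQ y, h, map_zero]))
    rwa [hKQ, real_inner_comm] at this
  obtain ⟨μ, hμ, hμQ⟩ := exists_pos_mul_sq_le_inner_self Q.toLinearMap hQpos
  set ρ := fun t => ⟪Q (x t), x t⟫
  have hρ : ∀ t, HasDerivAt ρ (-2 * ⟪x t, g t⟫) t := by
    intro t
    refine ((Q.hasFDerivAt.comp_hasDerivAt t (hx t)).inner ℝ (hx t)).congr_deriv ?_
    rw [Function.comp_apply, map_neg, hQK, inner_neg_right, inner_neg_left, ← hKsymm, hKQ,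
      real_inner_comm (g t)]
    ring
  obtain ⟨C, hC⟩ := (isCompact_closedBall (0 : E) 1).exists_bound_of_continuousOn
    (Q.continuous.inner (𝕜 := ℝ) continuous_id).continuousOn
  have hdec : ∀ t ≥ T, C < ρ t → -2 * ⟪x t, g t⟫ ≤ 0 := by
    intro t ht hCρ
    have h1 : 1 ≤ ‖x t‖ := by
      by_contra! hlt
      have := hC (x t) (mem_closedBall_zero_iff.mpr hlt.le)
      rw [id, Real.norm_eq_abs] at this
      linarith [le_abs_self (ρ t)]
    linarith [hg t ht h1]
  refine ⟨√(max (ρ T) C / μ), fun t ht => Real.le_sqrt_of_sq_le ?_⟩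
  rw [le_div_iff₀ hμ, mul_comm]
  exact (hμQ (x t)).trans (le_max_of_hasDerivAt_nonpos_of_lt hρ hdec ht)

end Lyapunov

theorem Continuous.exists_norm_le_of_forall_ge {F : Type*} [NormedAddCommGroup F] {x : ℝ → F}
    (hx : Continuous x) {T M : ℝ} (hM : ∀ t ≥ T, ‖x t‖ ≤ M) (a : ℝ) :
    ∃ M', ∀ t ≥ a, ‖x t‖ ≤ M' := by
  obtain ⟨C, hC⟩ := (isCompact_Icc (a := a) (b := T)).exists_bound_of_continuousOn hx.continuousOn
  refine ⟨max C M, fun t ht => ?_⟩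
  rcases le_total t T with htT | hTt
  · exact (hC t ⟨ht, htT⟩).trans (le_max_left C M)
  · exact (hM t hTt).trans (le_max_right C M)

theorem stmt19_general {n : ℕ}
    (f : EuclideanSpace ℝ (Fin n) → ℝ → ℝ)
    (hf : ∀ v, ContDiff ℝ 1 (fun x => f x v))
    (hconv : ∀ v, StrictConvexOn ℝ Set.univ (fun x => f x v))
    (xstarF : ℝ → EuclideanSpace ℝ (Fin n))
    (hmin : ∀ v, IsMinOn (fun x => f x v) Set.univ (xstarF v))
    (vstar : ℝ) (xstar : EuclideanSpace ℝ (Fin n)) (hxstar : xstar = xstarF vstar)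
    -- the coupling term `h(x̃, ṽ) = ∇_x f(x̃ + x*, v* + ṽ) − ∇_x f(x̃ + x*, v*)`
    (h : EuclideanSpace ℝ (Fin n) → ℝ → EuclideanSpace ℝ (Fin n))
    (hh : ∀ xt vt, h xt vt =
      gradient (fun x => f x (vstar + vt)) (xt + xstar) -
      gradient (fun x => f x vstar) (xt + xstar))
    -- growth condition F1)
    (G1 G2 : ℝ → ℝ)
    (hG1c : Continuous G1) (hG2c : Continuous G2) (hG10 : G1 0 = 0) (hG20 : G2 0 = 0)
    (hgrowth : ∀ xt vt, ‖h xt vt‖ ≤ G1 |vt| + G2 |vt| * ‖xt‖)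
    -- the perturbation `ṽ(t)` tends to `0` and is bounded
    (vt : ℝ → ℝ) (hvt : Tendsto vt atTop (nhds 0))
    -- `K` symmetric positive definite
    (K : EuclideanSpace ℝ (Fin n) →ₗ[ℝ] EuclideanSpace ℝ (Fin n))
    (hKsymm : ∀ u v, ⟪K u, v⟫ = ⟪u, K v⟫) (hKpos : ∀ u, u ≠ 0 → 0 < ⟪K u, u⟫)
    -- perturbed gradient flow `x̃̇ = −K∇_x f(x̃ + x*, v*) − K h(x̃, ṽ(t))`
    (xt : ℝ → EuclideanSpace ℝ (Fin n))
    (hdyn : ∀ t, HasDerivAt xt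
      (-(K (gradient (fun x => f x vstar) (xt t + xstar))) - K (h (xt t) (vt t))) t) :
    -- then the trajectory is bounded in forward time
    ∃ M : ℝ, ∀ t ≥ 0, ‖xt t‖ ≤ M := by
  obtain ⟨β, hβ, hβsphere⟩ :=
    (hconv vstar).exists_pos_le_inner_gradient_sphere (hf vstar) (hxstar ▸ hmin vstar)
  have hsmall : ∀ᶠ t in atTop, G1 |vt t| + G2 |vt t| ≤ β := by
    have hG : Tendsto (fun v => G1 |v| + G2 |v|) (nhds 0) (nhds 0) := by
      have := ((hG1c.comp continuous_abs).add (hG2c.comp continuous_abs)).tendsto 0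
      simpa only [Function.comp_def, Pi.add_def, abs_zero, hG10, hG20, add_zero] using this
    exact (hG.comp hvt).eventually (ge_mem_nhds hβ)
  obtain ⟨T, hT⟩ := eventually_atTop.mp hsmall
  have hflow : ∀ t, HasDerivAt xt (-K (∇ (fun x => f x (vstar + vt t)) (xt t + xstar))) t := by
    intro t
    convert hdyn t using 1
    rw [hh, map_sub]
    abel
  obtain ⟨M, hM⟩ := exists_norm_le_of_hasDerivAt_neg_apply K hKsymm hKpos hflow (T := T)
    fun t ht hx => by
      rw [real_inner_comm]
      refine (hconv _).convexOn.inner_gradient_nonneg_of_norm_gradient_sub_le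
        ((hf _).differentiable one_ne_zero) hβsphere (fun u hu => ?_) hx
      rw [← hh]
      exact (hgrowth u _).trans (by rw [hu, mul_one]; exact hT t ht)
  exact (continuous_iff_continuousAt.mpr fun t => (hdyn t).continuousAt).exists_norm_le_of_forall_ge
    hM 0

theorem stmt19 {n : ℕ}
    (f : EuclideanSpace ℝ (Fin n) → ℝ → ℝ)
    (hf : ∀ v, ContDiff ℝ 1 (fun x => f x v))
    (hconv : ∀ v, StrictConvexOn ℝ Set.univ (fun x => f x v))
    (xstarF : ℝ → EuclideanSpace ℝ (Fin n))
    (hmin : ∀ v, IsMinOn (fun x => f x v) Set.univ (xstarF v))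
    (vstar : ℝ) (xstar : EuclideanSpace ℝ (Fin n)) (hxstar : xstar = xstarF vstar)
    -- the coupling term `h(x̃, ṽ) = ∇_x f(x̃ + x*, v* + ṽ) − ∇_x f(x̃ + x*, v*)`
    (h : EuclideanSpace ℝ (Fin n) → ℝ → EuclideanSpace ℝ (Fin n))
    (hh : ∀ xt vt, h xt vt =
      gradient (fun x => f x (vstar + vt)) (xt + xstar) -
      gradient (fun x => f x vstar) (xt + xstar))
    -- growth condition F1)
    (G1 G2 : ℝ → ℝ) (hG1 : StrictMono G1) (hG2 : StrictMono G2)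
    (hG1c : Continuous G1) (hG2c : Continuous G2) (hG10 : G1 0 = 0) (hG20 : G2 0 = 0)
    (hgrowth : ∀ xt vt, ‖h xt vt‖ ≤ G1 |vt| + G2 |vt| * ‖xt‖)
    -- the perturbation `ṽ(t)` tends to `0` and is bounded
    (vt : ℝ → ℝ) (hvt : Tendsto vt atTop (nhds 0)) (hvb : ∃ M, ∀ t, |vt t| ≤ M)
    -- `K` symmetric positive definite
    (K : EuclideanSpace ℝ (Fin n) →ₗ[ℝ] EuclideanSpace ℝ (Fin n))
    (hKsymm : ∀ u v, ⟪K u, v⟫ = ⟪u, K v⟫) (hKpos : ∀ u, u ≠ 0 → 0 < ⟪K u, u⟫)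
    -- perturbed gradient flow `x̃̇ = −K∇_x f(x̃ + x*, v*) − K h(x̃, ṽ(t))`
    (xt : ℝ → EuclideanSpace ℝ (Fin n))
    (hdyn : ∀ t, HasDerivAt xt
      (-(K (gradient (fun x => f x vstar) (xt t + xstar))) - K (h (xt t) (vt t))) t)
    -- shifted cost `W` and growth condition F2)
    (W : EuclideanSpace ℝ (Fin n) → ℝ)
    (hW : ∀ x, W x = f (x + xstar) vstar - f xstar vstar)
    (c k : ℝ) (hc : 0 < c) (hk : 0 < k)
    (hF2 : ∀ x : EuclideanSpace ℝ (Fin n), c < ‖x‖ → ‖gradient W x‖ * ‖x‖ ≤ k * W x) :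
    -- then the trajectory is bounded in forward time
    ∃ M : ℝ, ∀ t ≥ 0, ‖xt t‖ ≤ M :=
  stmt19_general f hf hconv xstarF hmin vstar xstar hxstar h hh G1 G2 hG1c hG2c hG10 hG20 hgrowth vt
    hvt K hKsymm hKpos xt hdyn
end
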